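/- Let Γ be a Neumaier graph containing an e-regular clique of order s+1 (s, e positive integers), and suppose that every clique of Γ of order e+1 is contained in a clique of order s+1. Then Γ has diameter 2, i.e. Γ is connected, is not complete, and any two distinct non-adjacent vertices have a common neighbour. -/
import Mathlib


open scoped Classical
open Matrix

variable {V : Type*}

/-- `G` is edge-regular with parameters `(v, k, l)`: it has `v` vertices, every vertex has
degree `k`, and every pair of adjacent vertices has exactly `l` common neighbours. -/
def IsEdgeRegular [Fintype V] (G : SimpleGraph V) (v k l : ℕ) : Prop :=
  Fintype.card V = v ∧ G.IsRegularOfDegree k ∧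
    ∀ x y : V, G.Adj x y → Fintype.card (G.commonNeighbors x y) = l

/-- `C` is an `e`-regular clique of `G` (for `e > 0`): a clique such that every vertex
outside `C` is adjacent to exactly `e` vertices of `C`. -/
def IsRegularCliqueWith [Fintype V] (G : SimpleGraph V) (C : Finset V) (e : ℕ) : Prop :=
  G.IsClique ↑C ∧ 0 < e ∧ ∀ x : V, x ∉ C → (C.filter (fun y => G.Adj x y)).card = e

/-- A Neumaier graph: a non-complete edge-regular graph containing a regular clique. -/
def IsNeumaier [Fintype V] (G : SimpleGraph V) : Prop :=
  (∃ v k l : ℕ, IsEdgeRegular G v k l) ∧ G ≠ ⊤ ∧ ∃ (C : Finset V) (e : ℕ), IsRegularCliqueWith G C e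

/-- A graph is complete multipartite when non-adjacency (together with equality) is
a transitive relation on the vertices. -/
def IsCompleteMultipartite (G : SimpleGraph V) : Prop :=
  ∀ x y z : V, ¬G.Adj x y → ¬G.Adj y z → ¬G.Adj x z

/-- `θ` is a (real) eigenvalue of the adjacency matrix of `G`. -/
def IsAdjEigenvalue [Fintype V] (G : SimpleGraph V) (θ : ℝ) : Prop :=
  ∃ f : V → ℝ, f ≠ 0 ∧ G.adjMatrix ℝ *ᵥ f = θ • f

/-- The average, over all edges of `G`, of the number of common neighbours of the
two endpoints of the edge. -/
noncomputable def avgLambda [Fintype V] (G : SimpleGraph V) : ℝ :=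
  (∑ ed ∈ G.edgeFinset, Sym2.lift
      ⟨fun x y => ((G.commonNeighbors x y).ncard : ℝ),
       fun x y => by dsimp only; rw [SimpleGraph.commonNeighbors_symm]⟩ ed) / (G.edgeFinset.card : ℝ)



lemma deg_outside [Fintype V] (G : SimpleGraph V) (k s : ℕ)
    (hreg : G.IsRegularOfDegree k)
    (K : Finset V) (hK : G.IsClique ↑K) (hKcard : K.card = s + 1)
    {c : V} (hc : c ∈ K) :
    ((Kᶜ.filter (fun x => G.Adj x c)).card : ℤ) = (k : ℤ) - s := by
  have h1 : (G.neighborFinset c).filter (fun x => x ∈ K) = K.erase c := by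
    ext x
    simp only [Finset.mem_filter, SimpleGraph.mem_neighborFinset, Finset.mem_erase]
    constructor
    · rintro ⟨hadj, hxK⟩; exact ⟨hadj.ne', hxK⟩
    · rintro ⟨hne, hxK⟩; exact ⟨hK hc hxK (Ne.symm hne), hxK⟩
  have h2 : (G.neighborFinset c).filter (fun x => ¬ x ∈ K) = Kᶜ.filter (fun x => G.Adj x c) := by
    ext x
    simp only [Finset.mem_filter, SimpleGraph.mem_neighborFinset, Finset.mem_compl]
    exact ⟨fun ⟨h1, h2⟩ => ⟨h2, h1.symm⟩, fun ⟨h1, h2⟩ => ⟨h2.symm, h1⟩⟩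
  have h3 := Finset.card_filter_add_card_filter_not (s := G.neighborFinset c)
    (p := fun x => x ∈ K)
  rw [h1, h2, G.card_neighborFinset_eq_degree, hreg c, Finset.card_erase_of_mem hc, hKcard] at h3
  simp only [Nat.add_sub_cancel] at h3
  omega


lemma common_outside [Fintype V] (G : SimpleGraph V) (l s : ℕ)
    (hl : ∀ x y : V, G.Adj x y → Fintype.card (G.commonNeighbors x y) = l)
    (K : Finset V) (hK : G.IsClique ↑K) (hKcard : K.card = s + 1) (hs : 0 < s)
    {c c' : V} (hc : c ∈ K) (hc' : c' ∈ K) (hne : c ≠ c') :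
    ((Kᶜ.filter (fun x => G.Adj x c ∧ G.Adj x c')).card : ℤ) = (l : ℤ) - s + 1 := by
  have hadj : G.Adj c c' := hK hc hc' hne
  have hcard : ((G.commonNeighbors c c').toFinset).card = l := by
    rw [Set.toFinset_card]; exact hl c c' hadj
  set F := (G.commonNeighbors c c').toFinset with hF
  have hmem : ∀ x, x ∈ F ↔ G.Adj c x ∧ G.Adj c' x := by
    intro x
    rw [hF, Set.mem_toFinset, SimpleGraph.mem_commonNeighbors]
  have h1 : F.filter (fun x => x ∈ K) = (K.erase c).erase c' := by
    ext x
    simp only [Finset.mem_filter, Finset.mem_erase, hmem]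
    constructor
    · rintro ⟨⟨h1, h2⟩, hxK⟩; exact ⟨h2.ne', h1.ne', hxK⟩
    · rintro ⟨hne1, hne2, hxK⟩
      exact ⟨⟨hK hc hxK (Ne.symm hne2), hK hc' hxK (Ne.symm hne1)⟩, hxK⟩
  have h2 : F.filter (fun x => ¬ x ∈ K) = Kᶜ.filter (fun x => G.Adj x c ∧ G.Adj x c') := by
    ext x
    simp only [Finset.mem_filter, Finset.mem_compl, hmem]
    exact ⟨fun ⟨⟨a, b⟩, h⟩ => ⟨h, a.symm, b.symm⟩, fun ⟨h, a, b⟩ => ⟨⟨a.symm, b.symm⟩, h⟩⟩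
  have h3 := Finset.card_filter_add_card_filter_not (s := F) (p := fun x => x ∈ K)
  rw [h1, h2, hcard, Finset.card_erase_of_mem (Finset.mem_erase.2 ⟨Ne.symm hne, hc'⟩),
    Finset.card_erase_of_mem hc, hKcard] at h3
  simp only [Nat.add_sub_cancel] at h3
  omega

lemma sum_d [Fintype V] (G : SimpleGraph V) (k s : ℕ)
    (hreg : G.IsRegularOfDegree k)
    (K : Finset V) (hK : G.IsClique ↑K) (hKcard : K.card = s + 1) :
    ∑ x ∈ Kᶜ, ((K.filter (fun y => G.Adj x y)).card : ℤ) = (s + 1) * ((k : ℤ) - s) := by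
  have step : ∀ x, ((K.filter (fun y => G.Adj x y)).card : ℤ)
      = ∑ c ∈ K, (if G.Adj x c then (1 : ℤ) else 0) := by
    intro x; rw [Finset.card_filter]; push_cast; rfl
  calc ∑ x ∈ Kᶜ, ((K.filter (fun y => G.Adj x y)).card : ℤ)
      = ∑ x ∈ Kᶜ, ∑ c ∈ K, (if G.Adj x c then (1 : ℤ) else 0) :=
        Finset.sum_congr rfl (fun x _ => step x)
    _ = ∑ c ∈ K, ∑ x ∈ Kᶜ, (if G.Adj x c then (1 : ℤ) else 0) := Finset.sum_comm
    _ = ∑ c ∈ K, ((Kᶜ.filter (fun x => G.Adj x c)).card : ℤ) :=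
        Finset.sum_congr rfl (fun c _ => by rw [Finset.card_filter]; push_cast; rfl)
    _ = ∑ c ∈ K, ((k : ℤ) - s) :=
        Finset.sum_congr rfl (fun c hc => deg_outside G k s hreg K hK hKcard hc)
    _ = (s + 1) * ((k : ℤ) - s) := by rw [Finset.sum_const, hKcard]; push_cast; ring

lemma sum_d_sq [Fintype V] (G : SimpleGraph V) (k l s : ℕ)
    (hreg : G.IsRegularOfDegree k)
    (hl : ∀ x y : V, G.Adj x y → Fintype.card (G.commonNeighbors x y) = l)
    (K : Finset V) (hK : G.IsClique ↑K) (hKcard : K.card = s + 1) (hs : 0 < s) :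
    ∑ x ∈ Kᶜ, ((K.filter (fun y => G.Adj x y)).card : ℤ) ^ 2
      = (s + 1) * (((k : ℤ) - s) + s * ((l : ℤ) - s + 1)) := by
  have step : ∀ x, ((K.filter (fun y => G.Adj x y)).card : ℤ) ^ 2
      = ∑ c ∈ K, ∑ c' ∈ K, (if G.Adj x c ∧ G.Adj x c' then (1 : ℤ) else 0) := by
    intro x
    have h1 : ((K.filter (fun y => G.Adj x y)).card : ℤ)
        = ∑ c ∈ K, (if G.Adj x c then (1 : ℤ) else 0) := by
      rw [Finset.card_filter]; push_cast; rfl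
    rw [h1, sq, Finset.sum_mul_sum]
    refine Finset.sum_congr rfl (fun c _ => Finset.sum_congr rfl (fun c' _ => ?_))
    by_cases hc : G.Adj x c <;> by_cases hc' : G.Adj x c' <;> simp [hc, hc']
  calc ∑ x ∈ Kᶜ, ((K.filter (fun y => G.Adj x y)).card : ℤ) ^ 2
      = ∑ x ∈ Kᶜ, ∑ c ∈ K, ∑ c' ∈ K, (if G.Adj x c ∧ G.Adj x c' then (1 : ℤ) else 0) :=
        Finset.sum_congr rfl (fun x _ => step x)
    _ = ∑ c ∈ K, ∑ c' ∈ K, ∑ x ∈ Kᶜ, (if G.Adj x c ∧ G.Adj x c' then (1 : ℤ) else 0) := by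
        rw [Finset.sum_comm]
        exact Finset.sum_congr rfl (fun c _ => Finset.sum_comm)
    _ = ∑ c ∈ K, ∑ c' ∈ K, ((Kᶜ.filter (fun x => G.Adj x c ∧ G.Adj x c')).card : ℤ) := by
        refine Finset.sum_congr rfl (fun c _ => Finset.sum_congr rfl (fun c' _ => ?_))
        rw [Finset.card_filter]; push_cast; rfl
    _ = ∑ c ∈ K, (((k : ℤ) - s) + s * ((l : ℤ) - s + 1)) := by
        refine Finset.sum_congr rfl (fun c hc => ?_)
        rw [← Finset.add_sum_erase _ _ hc]
        have hdiag : ((Kᶜ.filter (fun x => G.Adj x c ∧ G.Adj x c)).card : ℤ) = (k : ℤ) - s := by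
          have heq : Kᶜ.filter (fun x => G.Adj x c ∧ G.Adj x c)
              = Kᶜ.filter (fun x => G.Adj x c) := by
            apply Finset.filter_congr; intro x _; simp
          rw [heq]
          exact deg_outside G k s hreg K hK hKcard hc
        rw [hdiag]
        congr 1
        calc ∑ c' ∈ K.erase c, ((Kᶜ.filter (fun x => G.Adj x c ∧ G.Adj x c')).card : ℤ)
            = ∑ c' ∈ K.erase c, ((l : ℤ) - s + 1) := by
              refine Finset.sum_congr rfl (fun c' hc' => ?_)
              have hc'K := Finset.mem_of_mem_erase hc'
              have hne : c ≠ c' := (Finset.ne_of_mem_erase hc').symm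
              exact common_outside G l s hl K hK hKcard hs hc hc'K hne
          _ = s * ((l : ℤ) - s + 1) := by
              rw [Finset.sum_const, Finset.card_erase_of_mem hc, hKcard]
              push_cast; ring
    _ = (s + 1) * (((k : ℤ) - s) + s * ((l : ℤ) - s + 1)) := by
        rw [Finset.sum_const, hKcard]; push_cast; ring

lemma clique_regular [Fintype V] (G : SimpleGraph V) (k l s e : ℕ)
    (hreg : G.IsRegularOfDegree k)
    (hl : ∀ x y : V, G.Adj x y → Fintype.card (G.commonNeighbors x y) = l)
    (hs : 0 < s)
    (C : Finset V) (hC : IsRegularCliqueWith G C e) (hCcard : C.card = s + 1)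
    (K : Finset V) (hK : G.IsClique ↑K) (hKcard : K.card = s + 1) :
    ∀ x ∉ K, (K.filter (fun y => G.Adj x y)).card = e := by
  obtain ⟨hCcl, hepos, hCe⟩ := hC
  have hNC : (Cᶜ.card : ℤ) = (Kᶜ.card : ℤ) := by
    simp [Finset.card_compl, hCcard, hKcard]
  set N : ℤ := (Kᶜ.card : ℤ) with hN
  have hC1 : ∑ x ∈ Cᶜ, ((C.filter (fun y => G.Adj x y)).card : ℤ) = N * e := by
    rw [Finset.sum_congr rfl (fun x hx => by rw [hCe x (Finset.mem_compl.1 hx)]),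
      Finset.sum_const, nsmul_eq_mul, hNC]
  have hC2 : ∑ x ∈ Cᶜ, ((C.filter (fun y => G.Adj x y)).card : ℤ) ^ 2 = N * e ^ 2 := by
    rw [Finset.sum_congr rfl (fun x hx => by rw [hCe x (Finset.mem_compl.1 hx)]),
      Finset.sum_const, nsmul_eq_mul, hNC]
  have E1 : (s + 1) * ((k : ℤ) - s) = N * e := by
    rw [← sum_d G k s hreg C hCcl hCcard]; exact hC1
  have E2 : ((s : ℤ) + 1) * (((k : ℤ) - s) + s * ((l : ℤ) - s + 1)) = N * e ^ 2 := by
    rw [← sum_d_sq G k l s hreg hl C hCcl hCcard hs]; exact hC2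
  have hexp : ∑ x ∈ Kᶜ, (((K.filter (fun y => G.Adj x y)).card : ℤ) - e) ^ 2
      = ((s : ℤ) + 1) * (((k : ℤ) - s) + s * ((l : ℤ) - s + 1))
        - 2 * e * ((s + 1) * ((k : ℤ) - s)) + e ^ 2 * N := by
    have hterm : ∀ x ∈ Kᶜ, (((K.filter (fun y => G.Adj x y)).card : ℤ) - e) ^ 2
        = ((K.filter (fun y => G.Adj x y)).card : ℤ) ^ 2
          - 2 * e * ((K.filter (fun y => G.Adj x y)).card : ℤ) + e ^ 2 := by
      intro x _; ring
    rw [Finset.sum_congr rfl hterm, Finset.sum_add_distrib, Finset.sum_sub_distrib,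
      sum_d_sq G k l s hreg hl K hK hKcard hs, ← Finset.mul_sum,
      sum_d G k s hreg K hK hKcard, Finset.sum_const, nsmul_eq_mul]
    ring
  have hzero : ∑ x ∈ Kᶜ, (((K.filter (fun y => G.Adj x y)).card : ℤ) - e) ^ 2 = 0 := by
    rw [hexp, E1, E2]; ring
  have hall := (Finset.sum_eq_zero_iff_of_nonneg (fun x _ => sq_nonneg _)).1 hzero
  intro x hx
  have h := hall x (Finset.mem_compl.2 hx)
  have h2 : ((K.filter (fun y => G.Adj x y)).card : ℤ) - e = 0 :=
    pow_eq_zero_iff (two_ne_zero) |>.1 h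
  have h3 : ((K.filter (fun y => G.Adj x y)).card : ℤ) = e := by linarith
  exact_mod_cast h3

/-- In a Neumaier graph with an `e`-regular clique of order `s + 1`, if every
clique of order `e + 1` is contained in a clique of order `s + 1`, then the graph has
diameter 2: it is connected, not complete, and any two distinct non-adjacent vertices have a
common neighbour. -/
theorem stmt5 [Fintype V] (G : SimpleGraph V) (v k l s e : ℕ)
    (hER : IsEdgeRegular G v k l) (hnc : G ≠ ⊤) (hs : 0 < s) (he : 0 < e)
    (C : Finset V) (hC : IsRegularCliqueWith G C e) (hCcard : C.card = s + 1)
    (hext : ∀ H : Finset V, G.IsNClique (e + 1) H → ∃ D : Finset V, G.IsNClique (s + 1) D ∧ H ⊆ D) :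
    G.Connected ∧ G ≠ ⊤ ∧
      ∀ x y : V, x ≠ y → ¬ G.Adj x y → ∃ z : V, G.Adj x z ∧ G.Adj z y := by
  obtain ⟨hv, hreg, hl⟩ := hER
  have key : ∀ x y : V, x ≠ y → ¬ G.Adj x y → ∃ z : V, G.Adj x z ∧ G.Adj z y := by
    intro x y hxy hnadj
    obtain ⟨D, hDcl, hDcard, hxD⟩ : ∃ D : Finset V, G.IsClique ↑D ∧ D.card = s + 1 ∧ x ∈ D := by
      by_cases hxC : x ∈ C
      · exact ⟨C, hC.1, hCcard, hxC⟩
      · set A := C.filter (fun y => G.Adj x y) with hA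
        have hAcard : A.card = e := hC.2.2 x hxC
        have hxA : x ∉ A := fun h => hxC (Finset.mem_of_mem_filter _ h)
        have hins : G.IsNClique (e + 1) (insert x A) := by
          constructor
          · rw [Finset.coe_insert]
            apply SimpleGraph.IsClique.insert
            · exact hC.1.subset (fun z hz =>
                Finset.mem_coe.2 (Finset.mem_of_mem_filter _ (Finset.mem_coe.1 hz)))
            · intro b hb _
              exact (Finset.mem_filter.1 (Finset.mem_coe.1 hb)).2
          · rw [Finset.card_insert_of_notMem hxA, hAcard]
        obtain ⟨D, hD, hsub⟩ := hext _ hins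
        exact ⟨D, hD.1, hD.2, hsub (Finset.mem_insert_self x A)⟩
    have hyD : y ∉ D := fun h => hnadj (hDcl hxD h hxy)
    have hyd := clique_regular G k l s e hreg hl hs C hC hCcard D hDcl hDcard y hyD
    have hnonempty : (D.filter (fun z => G.Adj y z)).Nonempty := by
      rw [← Finset.card_pos, hyd]; exact he
    obtain ⟨z, hz⟩ := hnonempty
    obtain ⟨hzD, hadj⟩ := Finset.mem_filter.1 hz
    have hzx : z ≠ x := fun h => hnadj (by rw [← h]; exact hadj.symm)
    exact ⟨z, hDcl hxD hzD (Ne.symm hzx), hadj.symm⟩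
  refine ⟨?_, hnc, key⟩
  have hnonemptyV : Nonempty V := by
    have hCne : C.Nonempty := Finset.card_pos.1 (by omega)
    exact ⟨hCne.choose⟩
  haveI := hnonemptyV
  refine SimpleGraph.Connected.mk (fun u w => ?_)
  by_cases huw : u = w
  · subst huw; exact SimpleGraph.Reachable.refl u
  by_cases hadj : G.Adj u w
  · exact hadj.reachable
  · obtain ⟨z, h1, h2⟩ := key u w huw hadj
    exact h1.reachable.trans h2.reachable
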